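/- Let D ⊂ ℝ^d be a compact set with finite positive Lebesgue measure, J = [0,T] with T > 0, (Ω, ℱ, ℙ) a probability space, and 1 ≤ p < ∞. Let w : Ω → L²(D×D), g : Ω → C⁰(J, L²(D)), v : Ω → L²(D) be strongly ℙ-measurable with K := ess sup_{ω∈Ω} ‖w(ω)‖_{L²(D×D)} < ∞, ∫_Ω ‖g(ω)‖_{C⁰}^p dℙ < ∞, and ∫_Ω ‖v(ω)‖₂^p dℙ < ∞. Let u : Ω → C¹(J, L²(D)) be strongly ℙ-measurable such that ℙ-a.s. u(ω)(0) = v(ω) and u(ω)'(t) = −u(ω)(t) + H(w(ω))(u(ω)(t)) + g(ω)(t) for all t ∈ J. Then ∫_Ω ‖u(ω)‖_{C⁰(J,L²(D))}^p dℙ(ω) ≤ 2^{p−1} e^{pTK} ( ∫_Ω ‖v(ω)‖₂^p dℙ(ω) + T^p ∫_Ω ‖g(ω)‖_{C⁰}^p dℙ(ω) ) < ∞. -/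

import Mathlib

/-!
Pathwise, the Hilbert–Schmidt bound `‖H(k) z‖₂ ≤ ‖k‖_{L²(D×D)} ‖z‖₂` makes the nonlocal term a
bounded perturbation of size at most `K` for a.e. `ω`. For the damped equation `u' = -u + A u + g`
with `‖A‖ ≤ K`, the weighted function `eˢ u(s)` satisfies `‖(eˢ u)'‖ ≤ K ‖eˢ u‖ + eᵗ ‖g‖` on
`[0, t]`, so Grönwall gives `‖u(t)‖ ≤ (‖v‖ + t ‖g‖) e^{K t}`. Raising this to the `p`-th power
with `(a + b)ᵖ ≤ 2^{p-1} (aᵖ + bᵖ)` and integrating over `Ω` gives the estimate.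
-/

open MeasureTheory Set Real
open scoped ENNReal NNReal

section IntegralKernel

variable {α β : Type*} [MeasurableSpace α] [MeasurableSpace β] {μ : Measure α} {ν : Measure β}

theorem eLpNorm_two_rpow_two {γ : Type*} [MeasurableSpace γ] {m : Measure γ} (f : γ → ℝ) :
    eLpNorm f 2 m ^ (2 : ℝ) = ∫⁻ x, ‖f x‖ₑ ^ (2 : ℝ) ∂m := by
  simpa using eLpNorm_nnreal_pow_eq_lintegral (f := f) (p := 2) two_ne_zero

theorem enorm_integral_mul_le_eLpNorm_mul_eLpNorm {k z : β → ℝ}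
    (hk : AEStronglyMeasurable k ν) (hz : AEStronglyMeasurable z ν) :
    ‖∫ y, k y * z y ∂ν‖ₑ ≤ eLpNorm k 2 ν * eLpNorm z 2 ν :=
  calc ‖∫ y, k y * z y ∂ν‖ₑ ≤ eLpNorm (fun y => k y * z y) 1 ν := by
        rw [eLpNorm_one_eq_lintegral_enorm]; exact enorm_integral_le_lintegral_enorm _
    _ ≤ eLpNorm k 2 ν * eLpNorm z 2 ν := by
        simpa using eLpNorm_le_eLpNorm_mul_eLpNorm'_of_norm hk hz (· * ·) 1
          (.of_forall fun y => by simp [norm_mul])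

theorem eLpNorm_integral_kernel_le [SFinite ν] {k : α × β → ℝ}
    (hk : AEStronglyMeasurable k (μ.prod ν)) {z : β → ℝ} (hz : AEStronglyMeasurable z ν) :
    eLpNorm (fun x => ∫ y, k (x, y) * z y ∂ν) 2 μ ≤ eLpNorm k 2 (μ.prod ν) * eLpNorm z 2 ν := by
  obtain ⟨k', hk'm, hkk'⟩ := hk
  have hpointwise : ∀ᵐ x ∂μ, ‖∫ y, k (x, y) * z y ∂ν‖ₑ ^ (2 : ℝ) ≤
      (∫⁻ y, ‖k' (x, y)‖ₑ ^ (2 : ℝ) ∂ν) * eLpNorm z 2 ν ^ (2 : ℝ) := by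
    filter_upwards [Measure.ae_ae_eq_curry_of_prod hkk'] with x hx
    have hint : ∫ y, k (x, y) * z y ∂ν = ∫ y, k' (x, y) * z y ∂ν :=
      integral_congr_ae (hx.mono fun y hy => by simp_all)
    rw [hint, ← eLpNorm_two_rpow_two, ← ENNReal.mul_rpow_of_nonneg _ _ zero_le_two]
    gcongr
    exact enorm_integral_mul_le_eLpNorm_mul_eLpNorm
      (hk'm.comp_measurable measurable_prodMk_left).aestronglyMeasurable hz
  have hk'sq : Measurable fun q : α × β => ‖k' q‖ₑ ^ (2 : ℝ) :=
    hk'm.measurable.enorm.pow_const _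
  suffices eLpNorm (fun x => ∫ y, k (x, y) * z y ∂ν) 2 μ ^ (2 : ℝ) ≤
      (eLpNorm k 2 (μ.prod ν) * eLpNorm z 2 ν) ^ (2 : ℝ) from
    (ENNReal.rpow_le_rpow_iff two_pos).1 this
  calc eLpNorm (fun x => ∫ y, k (x, y) * z y ∂ν) 2 μ ^ (2 : ℝ)
      ≤ ∫⁻ x, (∫⁻ y, ‖k' (x, y)‖ₑ ^ (2 : ℝ) ∂ν) * eLpNorm z 2 ν ^ (2 : ℝ) ∂μ := by
        rw [eLpNorm_two_rpow_two]; exact lintegral_mono_ae hpointwise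
    _ = (∫⁻ q, ‖k' q‖ₑ ^ (2 : ℝ) ∂(μ.prod ν)) * eLpNorm z 2 ν ^ (2 : ℝ) := by
        rw [lintegral_mul_const _ hk'sq.lintegral_prod_right', lintegral_prod _ hk'sq.aemeasurable]
    _ = (eLpNorm k 2 (μ.prod ν) * eLpNorm z 2 ν) ^ (2 : ℝ) := by
        rw [ENNReal.mul_rpow_of_nonneg _ _ zero_le_two, eLpNorm_congr_ae hkk', eLpNorm_two_rpow_two k']

theorem Lp.norm_le_of_ae_eq_integral_kernel [SFinite ν] (k : Lp ℝ 2 (μ.prod ν))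
    (z : Lp ℝ 2 ν) (f : Lp ℝ 2 μ) (hf : f =ᵐ[μ] fun x => ∫ y, k (x, y) * z y ∂ν) :
    ‖f‖ ≤ ‖k‖ * ‖z‖ := by
  simp only [Lp.norm_def, ← ENNReal.toReal_mul]
  refine ENNReal.toReal_mono (by finiteness) ?_
  rw [eLpNorm_congr_ae hf]
  exact eLpNorm_integral_kernel_le (Lp.aestronglyMeasurable k) (Lp.aestronglyMeasurable z)

end IntegralKernel

theorem gronwallBound_le_mul_exp {δ K ε : ℝ} (hK : 0 ≤ K) (hε : 0 ≤ ε) (x : ℝ) :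
    gronwallBound δ K ε x ≤ (δ + ε * x) * exp (K * x) := by
  rcases hK.eq_or_lt with rfl | hK
  · simp [gronwallBound_K0]
  have hexp : exp (K * x) - 1 ≤ K * x * exp (K * x) := by
    have h := mul_le_mul_of_nonneg_right (add_one_le_exp (-(K * x))) (exp_pos (K * x)).le
    rw [← exp_add, neg_add_cancel, exp_zero] at h
    linarith
  rw [gronwallBound_of_K_ne_0 hK.ne']
  calc δ * exp (K * x) + ε / K * (exp (K * x) - 1)
      ≤ δ * exp (K * x) + ε / K * (K * x * exp (K * x)) := by gcongr
    _ = (δ + ε * x) * exp (K * x) := by field_simp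

section LinearODE

variable {E : Type*} [NormedAddCommGroup E] [NormedSpace ℝ E]

theorem norm_le_mul_exp_of_hasDerivWithinAt_neg_add {U G : ℝ → E} {A : E → E} {K M T : ℝ}
    (hK : 0 ≤ K) (hA : ∀ x, ‖A x‖ ≤ K * ‖x‖) (hG : ∀ t ∈ Icc 0 T, ‖G t‖ ≤ M)
    (hU : ∀ t ∈ Icc 0 T, HasDerivWithinAt U (-U t + A (U t) + G t) (Icc 0 T) t) :
    ∀ t ∈ Icc 0 T, ‖U t‖ ≤ (‖U 0‖ + t * M) * exp (K * t) := by
  rintro t₀ ⟨ht₀, ht₀T⟩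
  have hM : 0 ≤ M := (norm_nonneg _).trans (hG t₀ ⟨ht₀, ht₀T⟩)
  set F : ℝ → E := fun s => exp s • U s
  have hF : ∀ s ∈ Icc 0 T, HasDerivWithinAt F (exp s • (A (U s) + G s)) (Icc 0 T) s := by
    intro s hs
    convert (hasDerivAt_exp s).hasDerivWithinAt.smul (hU s hs) using 1
    · rfl
    · simp only [smul_add, smul_neg]
      abel
  have hF_bound : ∀ s ∈ Ico 0 t₀, ‖exp s • (A (U s) + G s)‖ ≤ K * ‖F s‖ + exp t₀ * M := by
    rintro s ⟨hs0, hst⟩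
    have hsI : s ∈ Icc 0 T := ⟨hs0, hst.le.trans ht₀T⟩
    rw [norm_smul, norm_smul, norm_of_nonneg (exp_pos s).le]
    calc exp s * ‖A (U s) + G s‖ ≤ exp s * (K * ‖U s‖ + M) :=
          mul_le_mul_of_nonneg_left ((norm_add_le _ _).trans (add_le_add (hA _) (hG s hsI)))
            (exp_pos s).le
      _ ≤ K * (exp s * ‖U s‖) + exp t₀ * M := by
          nlinarith [exp_le_exp.2 hst.le]
  have hF_gronwall := norm_le_gronwallBound_of_norm_deriv_right_le (δ := ‖U 0‖) (a := 0) (b := t₀)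
    (fun s hs => (hF s ⟨hs.1, hs.2.trans ht₀T⟩).continuousWithinAt.mono
      (Icc_subset_Icc_right ht₀T))
    (fun s hs => (hF s ⟨hs.1, hs.2.le.trans ht₀T⟩).mono_of_mem_nhdsWithin <|
      Filter.mem_of_superset (Icc_mem_nhdsGE (hs.2.trans_le ht₀T))
        (Icc_subset_Icc_left hs.1))
    (by simp [F]) hF_bound t₀ ⟨ht₀, le_rfl⟩
  rw [sub_zero] at hF_gronwall
  have hFt₀ : ‖F t₀‖ = exp t₀ * ‖U t₀‖ := by
    simp [F, norm_smul, norm_of_nonneg (exp_pos t₀).le]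
  have h1 : 1 ≤ exp t₀ := one_le_exp ht₀
  refine le_of_mul_le_mul_left ?_ (exp_pos t₀)
  calc exp t₀ * ‖U t₀‖ ≤ (‖U 0‖ + exp t₀ * M * t₀) * exp (K * t₀) :=
        hFt₀ ▸ hF_gronwall.trans (gronwallBound_le_mul_exp hK (by positivity) t₀)
    _ ≤ (exp t₀ * ‖U 0‖ + exp t₀ * M * t₀) * exp (K * t₀) := by
        gcongr
        exact le_mul_of_one_le_left (norm_nonneg _) h1
    _ = exp t₀ * ((‖U 0‖ + t₀ * M) * exp (K * t₀)) := by ring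

theorem ContinuousMap.norm_le_of_hasDerivWithinAt_neg_add {T : ℝ} (hT : 0 < T)
    {u g : C(Icc 0 T, E)} {A : E → E} {K : ℝ} (hK : 0 ≤ K) (hA : ∀ x, ‖A x‖ ≤ K * ‖x‖)
    (hu : ∀ t ∈ Icc 0 T,
      HasDerivWithinAt (fun s => u (projIcc 0 T hT.le s))
        (-(u (projIcc 0 T hT.le t)) + A (u (projIcc 0 T hT.le t)) + g (projIcc 0 T hT.le t))
        (Icc 0 T) t) :
    ‖u‖ ≤ (‖u (projIcc 0 T hT.le 0)‖ + T * ‖g‖) * exp (K * T) := by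
  refine (u.norm_le (by positivity)).2 fun t => ?_
  have hU := norm_le_mul_exp_of_hasDerivWithinAt_neg_add hK hA
    (fun s _ => g.norm_coe_le_norm (projIcc 0 T hT.le s)) hu t t.2
  simp only [projIcc_val] at hU
  calc ‖u t‖ ≤ (‖u (projIcc 0 T hT.le 0)‖ + t * ‖g‖) * exp (K * t) := hU
    _ ≤ (‖u (projIcc 0 T hT.le 0)‖ + T * ‖g‖) * exp (K * T) := by
        have := t.2
        gcongr <;> exact this.2

end LinearODE

theorem ENNReal.rpow_le_of_le_mul_add {a b c C τ : ℝ≥0∞} {p : ℝ} (hp : 1 ≤ p)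
    (h : a ≤ (b + τ * c) * C) : a ^ p ≤ 2 ^ (p - 1) * C ^ p * (b ^ p + τ ^ p * c ^ p) := by
  have hp0 : 0 ≤ p := zero_le_one.trans hp
  calc a ^ p ≤ (b + τ * c) ^ p * C ^ p := by
        rw [← ENNReal.mul_rpow_of_nonneg _ _ hp0]; gcongr
    _ ≤ 2 ^ (p - 1) * (b ^ p + (τ * c) ^ p) * C ^ p := by
        gcongr; exact ENNReal.rpow_add_le_mul_rpow_add_rpow _ _ hp
    _ = 2 ^ (p - 1) * C ^ p * (b ^ p + τ ^ p * c ^ p) := by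
        rw [ENNReal.mul_rpow_of_nonneg _ _ hp0]; ring

theorem MeasureTheory.lintegral_le_mul_add_of_ae_le {Ω : Type*} [MeasurableSpace Ω]
    {ℙ : Measure Ω} {f F G : Ω → ℝ≥0∞} {C c : ℝ≥0∞} (hC : C ≠ ⊤) (hc : c ≠ ⊤)
    (hF : AEMeasurable F ℙ) (h : ∀ᵐ ω ∂ℙ, f ω ≤ C * (F ω + c * G ω)) :
    ∫⁻ ω, f ω ∂ℙ ≤ C * (∫⁻ ω, F ω ∂ℙ + c * ∫⁻ ω, G ω ∂ℙ) := by
  calc ∫⁻ ω, f ω ∂ℙ ≤ ∫⁻ ω, C * (F ω + c * G ω) ∂ℙ := lintegral_mono_ae h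
    _ = C * (∫⁻ ω, F ω ∂ℙ + c * ∫⁻ ω, G ω ∂ℙ) := by
        rw [lintegral_const_mul' _ _ hC, lintegral_add_left' hF, lintegral_const_mul' _ _ hc]

theorem stmt16_general (d : ℕ) (D : Set (EuclideanSpace ℝ (Fin d)))
    (T : ℝ) (hT : 0 < T)
    (Ω : Type*) [MeasurableSpace Ω] (ℙ : Measure Ω)
    (p : ℝ) (hp : 1 ≤ p)
    (HH : Lp ℝ 2 ((volume.restrict D).prod (volume.restrict D)) →
      (Lp ℝ 2 (volume.restrict D) →L[ℝ] Lp ℝ 2 (volume.restrict D)))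
    (hHH : ∀ kk (z : Lp ℝ 2 (volume.restrict D)),
      (HH kk z : _ → ℝ) =ᵐ[volume.restrict D]
        fun x => ∫ x', kk (x, x') * z x' ∂(volume.restrict D))
    (w : Ω → Lp ℝ 2 ((volume.restrict D).prod (volume.restrict D)))
    (hK : essSup (fun ω => (‖w ω‖₊ : ℝ≥0∞)) ℙ < ⊤)
    (g : Ω → C(Set.Icc (0:ℝ) T, Lp ℝ 2 (volume.restrict D)))
    (hgp : ∫⁻ ω, (‖g ω‖₊ : ℝ≥0∞) ^ p ∂ℙ < ⊤)
    (v : Ω → Lp ℝ 2 (volume.restrict D)) (hv : AEStronglyMeasurable v ℙ)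
    (hvp : ∫⁻ ω, (‖v ω‖₊ : ℝ≥0∞) ^ p ∂ℙ < ⊤)
    (u : Ω → C(Set.Icc (0:ℝ) T, Lp ℝ 2 (volume.restrict D)))
    (husol : ∀ᵐ ω ∂ℙ,
      u ω (Set.projIcc 0 T hT.le 0) = v ω ∧
      ∀ t ∈ Set.Icc (0:ℝ) T,
        HasDerivWithinAt (fun s : ℝ => u ω (Set.projIcc 0 T hT.le s))
          (-(u ω (Set.projIcc 0 T hT.le t)) +
            HH (w ω) (u ω (Set.projIcc 0 T hT.le t)) +
            g ω (Set.projIcc 0 T hT.le t))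
          (Set.Icc (0:ℝ) T) t) :
    ∫⁻ ω, (‖u ω‖₊ : ℝ≥0∞) ^ p ∂ℙ ≤
      ENNReal.ofReal (2 ^ (p - 1) *
          Real.exp (p * T * (essSup (fun ω => (‖w ω‖₊ : ℝ≥0∞)) ℙ).toReal)) *
        (∫⁻ ω, (‖v ω‖₊ : ℝ≥0∞) ^ p ∂ℙ + ENNReal.ofReal (T ^ p) * ∫⁻ ω, (‖g ω‖₊ : ℝ≥0∞) ^ p ∂ℙ) ∧
    ∫⁻ ω, (‖u ω‖₊ : ℝ≥0∞) ^ p ∂ℙ < ⊤ := by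
  set K := (essSup (fun ω => (‖w ω‖₊ : ℝ≥0∞)) ℙ).toReal
  have hK0 : 0 ≤ K := ENNReal.toReal_nonneg
  have hw_le : ∀ᵐ ω ∂ℙ, ‖w ω‖ ≤ K := by
    filter_upwards [ENNReal.ae_le_essSup (fun ω => (‖w ω‖₊ : ℝ≥0∞))] with ω hω
    simpa using ENNReal.toReal_mono hK.ne hω
  have hconst : ENNReal.ofReal (2 ^ (p - 1) * exp (p * T * K)) =
      2 ^ (p - 1) * ENNReal.ofReal (exp (K * T)) ^ p := by
    rw [ENNReal.ofReal_mul (by positivity), ENNReal.ofReal_rpow_of_pos (exp_pos _),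
      ← exp_mul, ← ENNReal.ofReal_rpow_of_pos two_pos, ENNReal.ofReal_ofNat]
    ring_nf
  have hpath : ∀ᵐ ω ∂ℙ, (‖u ω‖₊ : ℝ≥0∞) ^ p ≤ ENNReal.ofReal (2 ^ (p - 1) * exp (p * T * K)) *
      ((‖v ω‖₊ : ℝ≥0∞) ^ p + ENNReal.ofReal (T ^ p) * (‖g ω‖₊ : ℝ≥0∞) ^ p) := by
    filter_upwards [husol, hw_le] with ω ⟨hu0, hu⟩ hwω
    have hA : ∀ z, ‖HH (w ω) z‖ ≤ K * ‖z‖ := fun z =>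
      (Lp.norm_le_of_ae_eq_integral_kernel _ z _ (hHH (w ω) z)).trans (by gcongr)
    have hbound := ContinuousMap.norm_le_of_hasDerivWithinAt_neg_add hT hK0 hA hu
    rw [hu0] at hbound
    rw [hconst, ← ENNReal.ofReal_rpow_of_nonneg hT.le (by linarith)]
    refine ENNReal.rpow_le_of_le_mul_add hp ?_
    have := ENNReal.ofReal_le_ofReal hbound
    rwa [ENNReal.ofReal_mul (by positivity), ENNReal.ofReal_add (norm_nonneg _) (by positivity),
      ENNReal.ofReal_mul hT.le, ofReal_norm, ofReal_norm, ofReal_norm] at this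
  have hint := lintegral_le_mul_add_of_ae_le ENNReal.ofReal_ne_top ENNReal.ofReal_ne_top
    (hv.enorm.pow_const p) hpath
  exact ⟨hint, hint.trans_lt (by finiteness)⟩

/-- `Lᵖ`-estimate for the linear neural field with random data: with
`K = ess sup ‖w‖ < ∞` and `p`-integrable `g, v`, any strongly measurable `C¹`-solution `u`
satisfies `∫ ‖u‖_{C⁰}^p dℙ ≤ 2^{p−1} e^{pTK} (∫ ‖v‖₂^p dℙ + T^p ∫ ‖g‖_{C⁰}^p dℙ) < ∞`. -/
theorem stmt16 (d : ℕ) (D : Set (EuclideanSpace ℝ (Fin d)))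
    (hD : IsCompact D) (hpos : 0 < volume D) (hfin : volume D < ⊤)
    (T : ℝ) (hT : 0 < T)
    (Ω : Type*) [MeasurableSpace Ω] (ℙ : Measure Ω) [IsProbabilityMeasure ℙ]
    (p : ℝ) (hp : 1 ≤ p)
    (HH : Lp ℝ 2 ((volume.restrict D).prod (volume.restrict D)) →
      (Lp ℝ 2 (volume.restrict D) →L[ℝ] Lp ℝ 2 (volume.restrict D)))
    (hHH : ∀ kk (z : Lp ℝ 2 (volume.restrict D)),
      (HH kk z : _ → ℝ) =ᵐ[volume.restrict D]
        fun x => ∫ x', kk (x, x') * z x' ∂(volume.restrict D))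
    (w : Ω → Lp ℝ 2 ((volume.restrict D).prod (volume.restrict D)))
    (hw : AEStronglyMeasurable w ℙ)
    (hK : essSup (fun ω => (‖w ω‖₊ : ℝ≥0∞)) ℙ < ⊤)
    (g : Ω → C(Set.Icc (0:ℝ) T, Lp ℝ 2 (volume.restrict D)))
    (hg : AEStronglyMeasurable g ℙ)
    (hgp : ∫⁻ ω, (‖g ω‖₊ : ℝ≥0∞) ^ p ∂ℙ < ⊤)
    (v : Ω → Lp ℝ 2 (volume.restrict D)) (hv : AEStronglyMeasurable v ℙ)
    (hvp : ∫⁻ ω, (‖v ω‖₊ : ℝ≥0∞) ^ p ∂ℙ < ⊤)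
    (u : Ω → C(Set.Icc (0:ℝ) T, Lp ℝ 2 (volume.restrict D)))
    (humeas : AEStronglyMeasurable u ℙ)
    (husol : ∀ᵐ ω ∂ℙ,
      u ω (Set.projIcc 0 T hT.le 0) = v ω ∧
      ∀ t ∈ Set.Icc (0:ℝ) T,
        HasDerivWithinAt (fun s : ℝ => u ω (Set.projIcc 0 T hT.le s))
          (-(u ω (Set.projIcc 0 T hT.le t)) +
            HH (w ω) (u ω (Set.projIcc 0 T hT.le t)) +
            g ω (Set.projIcc 0 T hT.le t))
          (Set.Icc (0:ℝ) T) t) :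
    ∫⁻ ω, (‖u ω‖₊ : ℝ≥0∞) ^ p ∂ℙ ≤
      ENNReal.ofReal (2 ^ (p - 1) *
          Real.exp (p * T * (essSup (fun ω => (‖w ω‖₊ : ℝ≥0∞)) ℙ).toReal)) *
        (∫⁻ ω, (‖v ω‖₊ : ℝ≥0∞) ^ p ∂ℙ + ENNReal.ofReal (T ^ p) * ∫⁻ ω, (‖g ω‖₊ : ℝ≥0∞) ^ p ∂ℙ) ∧
    ∫⁻ ω, (‖u ω‖₊ : ℝ≥0∞) ^ p ∂ℙ < ⊤ :=
  stmt16_general d D T hT Ω ℙ p hp HH hHH w hK g hgp v hv hvp u husol
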